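/- arXiv:1412.8721 — 2 statements merged into one kernel-verified Lean document; each statement's English description precedes it below -/
import Mathlib

section
/- For 0 ≤ k ≤ n and 2r ≥ s ≥ 0, the unsigned r-Stirling numbers of the first kind satisfy c_{2r−s}(n,k) = Σ_{j=k}^{n} (−1)^{j−k} · L_r(n,j) · c_s(j,k). -/
open Finset

/-- The r-Lah numbers `L_r(n,k)` as integers. -/
def rLah (r : ℕ) : ℕ → ℕ → ℤ
  | 0, 0 => 1
  | 0, _ + 1 => 0
  | n + 1, 0 => ((n : ℤ) + 2 * r) * rLah r n 0
  | n + 1, k + 1 => rLah r n k + ((n : ℤ) + (k + 1) + 2 * r) * rLah r n (k + 1)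

/-- The unsigned r-Stirling numbers of the first kind `c_r(n,k)` as integers. -/
def rStirling1 (r : ℕ) : ℕ → ℕ → ℤ
  | 0, 0 => 1
  | 0, _ + 1 => 0
  | n + 1, 0 => ((n : ℤ) + r) * rStirling1 r n 0
  | n + 1, k + 1 => rStirling1 r n k + ((n : ℤ) + r) * rStirling1 r n (k + 1)

/-- The r-Stirling numbers of the second kind `S_r(n,k)` as integers. -/
def rStirling2 (r : ℕ) : ℕ → ℕ → ℤ
  | 0, 0 => 1
  | 0, _ + 1 => 0
  | n + 1, 0 => (r : ℤ) * rStirling2 r n 0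
  | n + 1, k + 1 => rStirling2 r n k + ((k : ℤ) + 1 + r) * rStirling2 r n (k + 1)


/-! The right-hand side is `(-1)^k` times the coefficient-wise Lah transform
`∑ⱼ (-1)^j L_r(n,j) c_s(j,k)`. Expanding `L_r(n+1,j)` by its recurrence and shifting the index
in the part carrying `L_r(n,j-1)` lets the recurrence of `c_s(j,k)` act; the weights `n+j+2r` and
`j+s` then combine to `n+2r-s`, so the transform satisfies the recurrence of `c_{2r-s}` up to the
sign `(-1)^k`. -/

theorem rLah_eq_zero_of_lt (r : ℕ) : ∀ {n k : ℕ}, n < k → rLah r n k = 0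
  | 0, _ + 1, _ => rfl
  | n + 1, k + 1, h => by
    rw [rLah, rLah_eq_zero_of_lt r (by omega), rLah_eq_zero_of_lt r (by omega), mul_zero, add_zero]

theorem rStirling1_eq_zero_of_lt (r : ℕ) : ∀ {n k : ℕ}, n < k → rStirling1 r n k = 0
  | 0, _ + 1, _ => rfl
  | n + 1, k + 1, h => by
    rw [rStirling1, rStirling1_eq_zero_of_lt r (by omega),
      rStirling1_eq_zero_of_lt r (by omega), mul_zero, add_zero]

theorem sum_neg_one_pow_mul_rLah_succ (r s n : ℕ) (u v : ℕ → ℤ)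
    (huv : ∀ j, u (j + 1) = v j + (j + s) * u j) :
    ∑ j ∈ range (n + 2), (-1) ^ j * rLah r (n + 1) j * u j =
      ((n : ℤ) + 2 * r - s) * ∑ j ∈ range (n + 1), (-1) ^ j * rLah r n j * u j -
        ∑ j ∈ range (n + 1), (-1) ^ j * rLah r n j * v j := by
  have htop : ∑ j ∈ range (n + 2), (-1) ^ j * ((n : ℤ) + j + 2 * r) * rLah r n j * u j =
      ∑ j ∈ range (n + 1), (-1) ^ j * ((n : ℤ) + j + 2 * r) * rLah r n j * u j := by
    rw [sum_range_succ, rLah_eq_zero_of_lt r (Nat.lt_succ_self n), mul_zero, zero_mul, add_zero]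
  have hsplit : ∑ j ∈ range (n + 2), (-1) ^ j * rLah r (n + 1) j * u j +
      ∑ j ∈ range (n + 1), (-1) ^ j * rLah r n j * u (j + 1) =
        ∑ j ∈ range (n + 2), (-1) ^ j * ((n : ℤ) + j + 2 * r) * rLah r n j * u j := by
    rw [sum_range_succ', sum_range_succ' _ (n + 1), add_right_comm, ← sum_add_distrib]
    congr 1
    · refine sum_congr rfl fun j _ => ?_
      rw [rLah]
      push_cast
      ring
    · simp [rLah]
  rw [eq_sub_of_add_eq hsplit, htop, mul_sum, ← sum_sub_distrib, ← sum_sub_distrib]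
  refine sum_congr rfl fun j _ => ?_
  rw [huv]
  ring

theorem rStirling1_sub_eq_neg_one_pow_mul_sum {r s : ℕ} (hs : s ≤ 2 * r) (n k : ℕ) :
    rStirling1 (2 * r - s) n k =
      (-1) ^ k * ∑ j ∈ range (n + 1), (-1) ^ j * rLah r n j * rStirling1 s j k := by
  have hcast : ((2 * r - s : ℕ) : ℤ) = 2 * r - s := by push_cast [hs]; ring
  induction n generalizing k with
  | zero => cases k <;> simp [rLah, rStirling1]
  | succ n ih =>
    cases k with
    | zero =>
      rw [sum_neg_one_pow_mul_rLah_succ r s n _ (fun _ => 0) fun j => by simp [rStirling1],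
        rStirling1, ih, hcast]
      simp only [pow_zero, one_mul, mul_zero, sum_const_zero, sub_zero]
      ring
    | succ k =>
      rw [sum_neg_one_pow_mul_rLah_succ r s n _ _ fun j => rStirling1.eq_4 s j k, rStirling1, ih,
        ih, hcast]
      ring

theorem sum_Icc_neg_one_pow_sub_mul_rStirling1 (f : ℕ → ℤ) (s n k : ℕ) :
    ∑ j ∈ Icc k n, (-1) ^ (j - k) * f j * rStirling1 s j k =
      (-1) ^ k * ∑ j ∈ range (n + 1), (-1) ^ j * f j * rStirling1 s j k := by
  have hsub : Icc k n ⊆ range (n + 1) := fun j hj => by simp at hj ⊢; omega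
  rw [mul_sum, ← sum_subset hsub fun j hj hjk => ?_]
  · refine sum_congr rfl fun j hj => ?_
    obtain ⟨i, rfl⟩ := Nat.exists_eq_add_of_le (mem_Icc.mp hj).1
    have hsq : (-1 : ℤ) ^ k * (-1) ^ k = 1 := pow_mul_pow_eq_one k (by norm_num)
    rw [Nat.add_sub_cancel_left, pow_add]
    linear_combination (-(-1) ^ i * f (k + i) * rStirling1 s (k + i) k) * hsq
  · have hjk : j < k := by simp at hj hjk; omega
    rw [rStirling1_eq_zero_of_lt s hjk, mul_zero, mul_zero]

theorem rStirling1_eq_alt_sum_rLah_general (n k r s : ℕ) (hs : s ≤ 2 * r) :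
    rStirling1 (2 * r - s) n k =
      ∑ j ∈ Icc k n, (-1) ^ (j - k) * rLah r n j * rStirling1 s j k := by
  rw [sum_Icc_neg_one_pow_sub_mul_rStirling1, rStirling1_sub_eq_neg_one_pow_mul_sum hs]

theorem rStirling1_eq_alt_sum_rLah (n k r s : ℕ) (hkn : k ≤ n) (hs : s ≤ 2 * r) :
    rStirling1 (2 * r - s) n k =
      ∑ j ∈ Icc k n, (-1) ^ (j - k) * rLah r n j * rStirling1 s j k :=
  rStirling1_eq_alt_sum_rLah_general n k r s hs
end

section
/- For 0 ≤ k ≤ n and 2s ≥ r ≥ 0, the r-Stirling numbers of the second kind satisfy S_{2s−r}(n,k) = Σ_{j=k}^{n} (−1)^{n−j} · S_r(n,j) · L_s(j,k). -/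
open Finset

/-!
Put `T(n, k) = ∑ⱼ (-1)ʲ S_r(n, j) L_s(j, k)`. The recurrence of `S_r` moves row `n + 1` to row `n`
at the cost of the weight `j + r`; the recurrence of `L_s` then produces the weight `j + k + 2s`
with the opposite sign, and the two combine to `k + 2s - r`, independent of `j`. Hence `T`
satisfies the recurrence of `(-1)ⁿ S_{2s-r}(n, k)`.
-/

theorem rLah_eq_zero_of_lt_s15 (s : ℕ) {n k : ℕ} (h : n < k) : rLah s n k = 0 := by
  induction n generalizing k with
  | zero => obtain ⟨k, rfl⟩ := Nat.exists_eq_succ_of_ne_zero h.ne'; rfl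
  | succ n ih =>
    obtain ⟨k, rfl⟩ := Nat.exists_eq_succ_of_ne_zero (Nat.ne_zero_of_lt h)
    simp only [rLah, ih (Nat.lt_of_succ_lt_succ h), ih (Nat.lt_of_succ_lt h), mul_zero, add_zero]

theorem rStirling2_eq_zero_of_lt (r : ℕ) {n k : ℕ} (h : n < k) : rStirling2 r n k = 0 := by
  induction n generalizing k with
  | zero => obtain ⟨k, rfl⟩ := Nat.exists_eq_succ_of_ne_zero h.ne'; rfl
  | succ n ih =>
    obtain ⟨k, rfl⟩ := Nat.exists_eq_succ_of_ne_zero (Nat.ne_zero_of_lt h)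
    simp only [rStirling2, ih (Nat.lt_of_succ_lt_succ h), ih (Nat.lt_of_succ_lt h), mul_zero,
      add_zero]

theorem sum_rStirling2_succ_mul (r n : ℕ) (f : ℕ → ℤ) :
    ∑ j ∈ range (n + 1 + 1), rStirling2 r (n + 1) j * f j =
      ∑ j ∈ range (n + 1), rStirling2 r n j * (f (j + 1) + (j + r) * f j) := by
  set g : ℕ → ℤ := fun j => (j + r) * rStirling2 r n j * f j with hg
  have hg_last : g (n + 1) = 0 := by simp [hg, rStirling2_eq_zero_of_lt r n.lt_succ_self]
  calc ∑ j ∈ range (n + 1 + 1), rStirling2 r (n + 1) j * f j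
      = ∑ i ∈ range (n + 1), (rStirling2 r n i * f (i + 1) + g (i + 1)) + g 0 := by
        rw [sum_range_succ']
        congr 1
        · refine sum_congr rfl fun i _ => ?_
          simp only [rStirling2, hg]
          push_cast
          ring
        · simp [rStirling2, hg]
    _ = ∑ i ∈ range (n + 1), rStirling2 r n i * f (i + 1) + ∑ j ∈ range (n + 1 + 1), g j := by
        rw [sum_add_distrib, sum_range_succ' g, add_assoc]
    _ = ∑ i ∈ range (n + 1), rStirling2 r n i * f (i + 1) + ∑ j ∈ range (n + 1), g j := by
        rw [sum_range_succ g, hg_last, add_zero]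
    _ = ∑ j ∈ range (n + 1), rStirling2 r n j * (f (j + 1) + (j + r) * f j) := by
        rw [← sum_add_distrib]
        exact sum_congr rfl fun j _ => by ring

def stirlingLahAltSum (r s n k : ℕ) : ℤ :=
  ∑ j ∈ range (n + 1), rStirling2 r n j * ((-1) ^ j * rLah s j k)

section stirlingLahAltSum

variable (r s : ℕ)

theorem stirlingLahAltSum_zero_zero : stirlingLahAltSum r s 0 0 = 1 := by
  simp [stirlingLahAltSum, rStirling2, rLah]

theorem stirlingLahAltSum_zero_succ (k : ℕ) : stirlingLahAltSum r s 0 (k + 1) = 0 := by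
  simp [stirlingLahAltSum, rLah]

theorem stirlingLahAltSum_succ_zero (n : ℕ) :
    stirlingLahAltSum r s (n + 1) 0 = -((2 * s - r : ℤ) * stirlingLahAltSum r s n 0) := by
  rw [stirlingLahAltSum, sum_rStirling2_succ_mul, stirlingLahAltSum, mul_sum, ← sum_neg_distrib]
  refine sum_congr rfl fun j _ => ?_
  simp only [rLah]
  ring

theorem stirlingLahAltSum_succ_succ (n k : ℕ) :
    stirlingLahAltSum r s (n + 1) (k + 1) =
      -(stirlingLahAltSum r s n k +
        (k + 1 + (2 * s - r : ℤ)) * stirlingLahAltSum r s n (k + 1)) := by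
  rw [stirlingLahAltSum, sum_rStirling2_succ_mul, stirlingLahAltSum, stirlingLahAltSum, mul_sum,
    ← sum_add_distrib, ← sum_neg_distrib]
  refine sum_congr rfl fun j _ => ?_
  simp only [rLah]
  ring

end stirlingLahAltSum

theorem stirlingLahAltSum_eq {r s : ℕ} (hr : r ≤ 2 * s) (n k : ℕ) :
    stirlingLahAltSum r s n k = (-1) ^ n * rStirling2 (2 * s - r) n k := by
  induction n generalizing k with
  | zero =>
    cases k with
    | zero => simp [stirlingLahAltSum_zero_zero, rStirling2]
    | succ k => simp [stirlingLahAltSum_zero_succ, rStirling2]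
  | succ n ih =>
    cases k with
    | zero =>
      rw [stirlingLahAltSum_succ_zero, ih, rStirling2]
      push_cast [hr]
      ring
    | succ k =>
      rw [stirlingLahAltSum_succ_succ, ih, ih, rStirling2]
      push_cast [hr]
      ring

theorem neg_one_pow_sub_of_le {R : Type*} [Monoid R] [HasDistribNeg R] {n j : ℕ} (h : j ≤ n) :
    (-1 : R) ^ (n - j) = (-1) ^ n * (-1) ^ j := by
  obtain ⟨d, rfl⟩ := Nat.exists_eq_add_of_le h
  rw [Nat.add_sub_cancel_left, pow_add, ((Commute.refl (-1 : R)).pow_pow j d).eq, mul_assoc,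
    ← pow_add, Even.neg_one_pow ⟨j, rfl⟩, mul_one]

theorem rStirling2_eq_alt_sum_rLah_general (n k r s : ℕ) (hr : r ≤ 2 * s) :
    rStirling2 (2 * s - r) n k =
      ∑ j ∈ Icc k n, (-1) ^ (n - j) * rStirling2 r n j * rLah s j k := by
  calc rStirling2 (2 * s - r) n k = (-1) ^ n * stirlingLahAltSum r s n k := by
        rw [stirlingLahAltSum_eq hr, ← mul_assoc, ← pow_add, Even.neg_one_pow ⟨n, rfl⟩, one_mul]
    _ = ∑ j ∈ range (n + 1), (-1) ^ (n - j) * rStirling2 r n j * rLah s j k := by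
        rw [stirlingLahAltSum, mul_sum]
        refine sum_congr rfl fun j hj => ?_
        rw [neg_one_pow_sub_of_le (mem_range_succ_iff.mp hj)]
        ring
    _ = ∑ j ∈ Icc k n, (-1) ^ (n - j) * rStirling2 r n j * rLah s j k := by
        refine (sum_subset (fun j hj => ?_) fun j hj hjk => ?_).symm
        · exact mem_range_succ_iff.mpr (mem_Icc.mp hj).2
        · have hj : j < k := by
            rw [mem_range] at hj
            rw [mem_Icc] at hjk
            omega
          rw [rLah_eq_zero_of_lt_s15 s hj, mul_zero]

theorem rStirling2_eq_alt_sum_rLah (n k r s : ℕ) (hkn : k ≤ n) (hr : r ≤ 2 * s) :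
    rStirling2 (2 * s - r) n k =
      ∑ j ∈ Icc k n, (-1) ^ (n - j) * rStirling2 r n j * rLah s j k :=
  rStirling2_eq_alt_sum_rLah_general n k r s hr
end
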